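/- arXiv:1201.6640 — 3 statements merged into one kernel-verified Lean document; each statement's English description precedes it below -/
import Mathlib

section
/- Fundamental lemma of the fractional calculus of variations: let 0 < α ≤ 1 and g : [a,b] → ℝ be continuous. If α ∫ₐᵇ (b-x)^{α-1} g(x) h(x) dx = 0 for every continuous h : [a,b] → ℝ with h(a) = h(b) = 0, then g ≡ 0 on [a,b]. -/
open Real MeasureTheory

/-- The Jumarie fractional integral `∫ₐᵇ φ(x)(dx)^α := α ∫ₐᵇ (b-x)^{α-1} φ(x) dx`. -/
noncomputable def fracInt (α a b : ℝ) (f : ℝ → ℝ) : ℝ :=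
  α * ∫ x in a..b, (b - x) ^ (α - 1) * f x

lemma aux_pos (α a b : ℝ) (hα : 0 < α) (hab : a < b)
    (g : ℝ → ℝ) (hg : ContinuousOn g (Set.Icc a b))
    (h0 : ∀ h : ℝ → ℝ, ContinuousOn h (Set.Icc a b) → h a = 0 → h b = 0 →
      fracInt α a b (fun x => g x * h x) = 0)
    (c : ℝ) (hc : c ∈ Set.Ioo a b) (hgc : 0 < g c) : False := by
  have hgcont : ContinuousAt g c :=
    (hg.mono Set.Ioo_subset_Icc_self).continuousAt (isOpen_Ioo.mem_nhds hc)
  have hev : ∀ᶠ x in nhds c, 0 < g x ∧ x ∈ Set.Ioo a b :=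
    (hgcont.eventually (eventually_gt_nhds hgc)).and (isOpen_Ioo.eventually_mem hc)
  obtain ⟨δ, hδ, hball⟩ := Metric.eventually_nhds_iff_ball.mp hev
  set r := δ / 2 with hr
  have hrpos : 0 < r := by positivity
  have hrδ : r < δ := by simp [hr]; linarith
  -- points c ± r are in the ball, hence in Ioo a b
  have hmem : ∀ y : ℝ, |y - c| < δ → 0 < g y ∧ y ∈ Set.Ioo a b := by
    intro y hy
    exact hball y (by simpa [Metric.mem_ball, Real.dist_eq] using hy)
  have hcr1 : c - r ∈ Set.Ioo a b := (hmem (c - r) (by rw [abs_of_nonpos (by linarith)]; simp; linarith)).2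
  have hcr2 : c + r ∈ Set.Ioo a b := (hmem (c + r) (by rw [abs_of_nonneg (by linarith)]; simp; linarith)).2
  -- the bump function
  set h : ℝ → ℝ := fun x => max 0 (r ^ 2 - (x - c) ^ 2) with hh
  have hhcont : Continuous h := continuous_const.max (by continuity)
  have hzero : ∀ x : ℝ, r ≤ |x - c| → h x = 0 := by
    intro x hx
    have : (x - c) ^ 2 ≥ r ^ 2 := by
      have := sq_abs (x - c)
      nlinarith [sq_nonneg (|x - c| - r)]
    simp only [hh]
    exact max_eq_left (by linarith)
  have ha0 : h a = 0 := hzero a (by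
    rw [abs_of_nonpos (by linarith [hc.1])]
    linarith [hcr1.1])
  have hb0 : h b = 0 := hzero b (by
    rw [abs_of_nonneg (by linarith [hc.2])]
    linarith [hcr2.2])
  have hprod : ∀ x : ℝ, 0 ≤ g x * h x := by
    intro x
    rcases le_or_gt r (|x - c|) with hx | hx
    · rw [hzero x hx, mul_zero]
    · exact mul_nonneg (le_of_lt (hmem x (hx.trans hrδ)).1) (le_max_left _ _)
  -- the vanishing hypothesis
  have hI : ∫ x in a..b, (b - x) ^ (α - 1) * (g x * h x) = 0 := by
    have := h0 h hhcont.continuousOn ha0 hb0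
    simp only [fracInt] at this
    exact (mul_eq_zero.mp this).resolve_left (ne_of_gt hα)
  set f : ℝ → ℝ := fun x => (b - x) ^ (α - 1) * (g x * h x) with hf
  set d : ℝ := c + r with hd
  have had : a < d := lt_trans hc.1 (by simp [hd]; linarith)
  have hdb : d < b := hcr2.2
  -- f vanishes on [d, b]
  have hfz : ∀ x ∈ Set.Icc d b, f x = 0 := by
    intro x hx
    have hx1 : r ≤ x - c := by
      have := hx.1
      simp only [hd] at this
      linarith
    have hz : h x = 0 := by
      apply hzero x
      rw [abs_of_nonneg (by linarith)]
      exact hx1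
    simp only [hf, hz, mul_zero]
  -- continuity of f on [a, d]
  have hfc : ContinuousOn f (Set.Icc a d) := by
    apply ContinuousOn.mul
    · apply ContinuousOn.rpow_const (by fun_prop)
      intro x hx
      left
      have : x ≤ d := hx.2
      intro hbx
      have : b - x > 0 := by linarith [hx.2, hdb]
      linarith [hbx ▸ this]
    · exact ((hg.mono (Set.Icc_subset_Icc le_rfl hdb.le)).mul hhcont.continuousOn)
  have h1 : IntervalIntegrable f volume a d := by
    apply ContinuousOn.intervalIntegrable
    rwa [Set.uIcc_of_le had.le]
  have h2 : IntervalIntegrable f volume d b := by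
    rw [intervalIntegrable_iff_integrableOn_Ioc_of_le hdb.le]
    exact (integrableOn_zero).congr_fun
      (fun x hx => (hfz x (Set.Ioc_subset_Icc_self hx)).symm) measurableSet_Ioc
  have hsplit : (∫ x in a..b, f x) = (∫ x in a..d, f x) + ∫ x in d..b, f x :=
    (intervalIntegral.integral_add_adjacent_intervals h1 h2).symm
  have hI2 : (∫ x in d..b, f x) = 0 := by
    rw [show (0 : ℝ) = ∫ x in d..b, (0 : ℝ) by simp]
    apply intervalIntegral.integral_congr
    intro x hx
    rw [Set.uIcc_of_le hdb.le] at hx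
    exact hfz x hx
  have hI1 : 0 < ∫ x in a..d, f x := by
    apply intervalIntegral.integral_pos had hfc
    · intro x hx
      exact mul_nonneg (Real.rpow_nonneg (by linarith [hx.2, hdb] : (0:ℝ) ≤ b - x) _) (hprod x)
    · refine ⟨c, ⟨hc.1.le, by simp [hd]; linarith⟩, ?_⟩
      have hhc : h c = r ^ 2 := by simp [hh]; positivity
      have : 0 < (b - c) ^ (α - 1) := Real.rpow_pos_of_pos (by linarith [hc.2]) _
      simp only [hf]
      rw [hhc]
      positivity
  rw [hsplit, hI2, add_zero] at hI
  exact absurd hI (ne_of_gt hI1)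

/-- Fundamental lemma of the fractional calculus of variations: if
`α ∫ₐᵇ (b-x)^{α-1} g(x) h(x) dx = 0` for every continuous `h` with `h(a) = h(b) = 0`,
then `g ≡ 0` on `[a,b]`. -/
theorem fractional_fundamental_lemma (α a b : ℝ) (hα : 0 < α) (hα1 : α ≤ 1) (hab : a < b)
    (g : ℝ → ℝ) (hg : ContinuousOn g (Set.Icc a b))
    (h0 : ∀ h : ℝ → ℝ, ContinuousOn h (Set.Icc a b) → h a = 0 → h b = 0 →
      fracInt α a b (fun x => g x * h x) = 0) :
    ∀ x ∈ Set.Icc a b, g x = 0 := by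
  have hIoo : ∀ y ∈ Set.Ioo a b, g y = 0 := by
    intro y hy
    by_contra hne
    rcases lt_or_gt_of_ne hne with hlt | hgt
    · -- apply aux to -g
      have h0' : ∀ h : ℝ → ℝ, ContinuousOn h (Set.Icc a b) → h a = 0 → h b = 0 →
          fracInt α a b (fun x => (-g) x * h x) = 0 := by
        intro h hc ha hb
        have key : (fun x : ℝ => (b - x) ^ (α - 1) * ((-g) x * h x))
            = fun x => -((b - x) ^ (α - 1) * (g x * h x)) := by
          funext x; simp only [Pi.neg_apply]; ring
        simp only [fracInt, key, intervalIntegral.integral_neg]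
        have := h0 h hc ha hb
        simp only [fracInt] at this
        rcases mul_eq_zero.mp this with h' | h'
        · exact absurd h' (ne_of_gt hα)
        · simp [h']
      exact absurd (aux_pos α a b hα hab (-g) hg.neg h0' y hy (by simpa using hlt)) id
    · exact absurd (aux_pos α a b hα hab g hg h0 y hy hgt) id
  intro x hx
  have hcw : ContinuousWithinAt g (Set.Ioo a b) x :=
    (hg x hx).mono Set.Ioo_subset_Icc_self
  haveI : (nhdsWithin x (Set.Ioo a b)).NeBot :=
    mem_closure_iff_nhdsWithin_neBot.mp (by rw [closure_Ioo hab.ne]; exact hx)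
  have t2 : Filter.Tendsto g (nhdsWithin x (Set.Ioo a b)) (nhds 0) := by
    apply Filter.Tendsto.congr' _ tendsto_const_nhds
    exact eventually_mem_nhdsWithin.mono fun y hy => (hIoo y hy).symm
  exact tendsto_nhds_unique hcw t2
end

section
/- Variant of the fundamental lemma: let 0 < α ≤ 1 and g : [a,b] → ℝ be continuous with g not identically zero. Then there exists a continuous h : [a,b] → ℝ with h(a) = h(b) = 0 such that α ∫ₐᵇ (b-x)^{α-1} g(x) h(x) dx ≠ 0. -/
open Real MeasureTheory

/-- Variant (contrapositive form) of the fundamental lemma: if `g` is continuous on `[a,b]`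
and not identically zero, then there is a continuous `h` with `h(a) = h(b) = 0` such that
`α ∫ₐᵇ (b-x)^{α-1} g(x) h(x) dx ≠ 0`. -/
theorem fractional_fundamental_lemma_variant (α a b : ℝ) (hα : 0 < α) (hα1 : α ≤ 1)
    (hab : a < b) (g : ℝ → ℝ) (hg : ContinuousOn g (Set.Icc a b))
    (hne : ∃ x ∈ Set.Icc a b, g x ≠ 0) :
    ∃ h : ℝ → ℝ, ContinuousOn h (Set.Icc a b) ∧ h a = 0 ∧ h b = 0 ∧
      fracInt α a b (fun x => g x * h x) ≠ 0 := by
  obtain ⟨x₀, hx₀, hgx₀⟩ := hne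
  -- find an interior point where g ≠ 0
  have hx₁ : ∃ x₁ ∈ Set.Ioo a b, g x₁ ≠ 0 := by
    have hcl : x₀ ∈ closure (Set.Ioo a b) := by
      rw [closure_Ioo hab.ne]; exact hx₀
    have hnb : (nhdsWithin x₀ (Set.Ioo a b)).NeBot :=
      mem_closure_iff_nhdsWithin_neBot.mp hcl
    have hev : ∀ᶠ x in nhdsWithin x₀ (Set.Icc a b), g x ≠ 0 := by
      have := (hg.continuousWithinAt hx₀).eventually_ne hgx₀
      exact this
    have hev' : ∀ᶠ x in nhdsWithin x₀ (Set.Ioo a b), g x ≠ 0 :=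
      hev.filter_mono (nhdsWithin_mono _ Set.Ioo_subset_Icc_self)
    have hmem : ∀ᶠ x in nhdsWithin x₀ (Set.Ioo a b), x ∈ Set.Ioo a b :=
      self_mem_nhdsWithin
    obtain ⟨x₁, h1, h2⟩ := (hmem.and hev').exists
    exact ⟨x₁, h1, h2⟩
  obtain ⟨x₁, hx₁m, hgx₁⟩ := hx₁
  refine ⟨fun x => g x * ((x - a) * (b - x)), ?_, by ring, by ring, ?_⟩
  · exact hg.mul (by fun_prop)
  · have hFcont : ContinuousOn (fun x => (b - x) ^ α * g x ^ 2 * (x - a)) (Set.Icc a b) := by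
      apply ContinuousOn.mul
      apply ContinuousOn.mul
      · apply Continuous.continuousOn
        apply Continuous.comp (g := fun y : ℝ => y ^ α)
        · exact continuous_iff_continuousAt.mpr fun y =>
            Real.continuousAt_rpow_const y α (Or.inr hα.le)
        · fun_prop
      · exact hg.pow 2
      · fun_prop
    have hcongr : ∀ x ∈ Set.uIcc a b,
        (b - x) ^ (α - 1) * (g x * (g x * ((x - a) * (b - x)))) =
        (b - x) ^ α * g x ^ 2 * (x - a) := by
      intro x hx
      rw [Set.uIcc_of_le hab.le] at hx
      rcases eq_or_lt_of_le hx.2 with hxb | hxb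
      · subst hxb; simp [Real.zero_rpow hα.ne']
      · have hbx : (0:ℝ) < b - x := by linarith
        have : (b - x) ^ (α - 1) * (b - x) = (b - x) ^ α := by
          rw [← Real.rpow_add_one hbx.ne']; ring_nf
        calc (b - x) ^ (α - 1) * (g x * (g x * ((x - a) * (b - x))))
            = ((b - x) ^ (α - 1) * (b - x)) * g x ^ 2 * (x - a) := by ring
          _ = (b - x) ^ α * g x ^ 2 * (x - a) := by rw [this]
    have hIpos : 0 < ∫ x in a..b, (b - x) ^ α * g x ^ 2 * (x - a) := by
      apply intervalIntegral.integral_pos hab hFcont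
      · intro x hx
        have : (0:ℝ) ≤ (b - x) ^ α := Real.rpow_nonneg (by linarith [hx.2]) α
        have h2 : (0:ℝ) ≤ g x ^ 2 := sq_nonneg _
        have h3 : (0:ℝ) ≤ x - a := by linarith [hx.1]
        positivity
      · refine ⟨x₁, Set.Ioo_subset_Icc_self hx₁m, ?_⟩
        have h1 : (0:ℝ) < (b - x₁) ^ α :=
          Real.rpow_pos_of_pos (by linarith [hx₁m.2]) α
        have h2 : (0:ℝ) < g x₁ ^ 2 := by positivity
        have h3 : (0:ℝ) < x₁ - a := by linarith [hx₁m.1]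
        positivity
    unfold fracInt
    rw [intervalIntegral.integral_congr hcongr]
    positivity
end

section
/- Weighted du Bois-Reymond positivity: let 0 < α ≤ 1 and g : [a,b] → ℝ continuous with g(x₀) > 0 at some x₀ ∈ (a,b). Then choosing h continuous, nonnegative, supported near x₀ with h(a)=h(b)=0, we have α ∫ₐᵇ (b-x)^{α-1} g(x) h(x) dx > 0. -/
open Real MeasureTheory

lemma intervalIntegrable_of_eqOn_zero (F : ℝ → ℝ) (a b : ℝ)
    (h : Set.EqOn F 0 (Set.uIcc a b)) : IntervalIntegrable F MeasureTheory.volume a b := by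
  rw [intervalIntegrable_iff]
  apply (integrable_zero _ _ _).congr
  filter_upwards [MeasureTheory.ae_restrict_mem measurableSet_Ioc] with x hx
  exact (h (Set.uIoc_subset_uIcc hx)).symm

/-- Weighted du Bois-Reymond positivity: if `g` is continuous on `[a,b]` and `g(x₀) > 0`
for some `x₀ ∈ (a,b)`, then there is a continuous nonnegative `h`, supported near `x₀`,
with `h(a) = h(b) = 0`, such that `α ∫ₐᵇ (b-x)^{α-1} g(x) h(x) dx > 0`. -/
theorem fractional_positivity (α a b x₀ : ℝ) (hα : 0 < α) (hα1 : α ≤ 1) (hab : a < b)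
    (g : ℝ → ℝ) (hg : ContinuousOn g (Set.Icc a b))
    (hx₀ : x₀ ∈ Set.Ioo a b) (hgx₀ : 0 < g x₀) :
    ∃ h : ℝ → ℝ, Continuous h ∧ (∀ x, 0 ≤ h x) ∧
      (∃ δ > (0 : ℝ), Function.support h ⊆ Set.Ioo (x₀ - δ) (x₀ + δ) ∧
        Set.Ioo (x₀ - δ) (x₀ + δ) ⊆ Set.Ioo a b) ∧
      h a = 0 ∧ h b = 0 ∧
      0 < fracInt α a b (fun x => g x * h x) := by
  obtain ⟨hax₀, hx₀b⟩ := hx₀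
  -- continuity of g at x₀
  have hcont : ContinuousAt g x₀ := by
    apply hg.continuousAt
    exact Filter.mem_of_superset (isOpen_Ioo.mem_nhds ⟨hax₀, hx₀b⟩) Set.Ioo_subset_Icc_self
  have hpre : g ⁻¹' Set.Ioi 0 ∈ nhds x₀ := hcont (Ioi_mem_nhds hgx₀)
  obtain ⟨ε, hε, hball⟩ := Metric.mem_nhds_iff.mp hpre
  set δ : ℝ := min ε (min (x₀ - a) (b - x₀)) / 2 with hδdef
  have hδ : 0 < δ := by
    apply div_pos _ two_pos
    exact lt_min hε (lt_min (by linarith) (by linarith))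
  have hδε : δ < ε := by
    have h0 := min_le_left ε (min (x₀ - a) (b - x₀))
    rw [hδdef]; linarith
  have hδa : δ < x₀ - a := by
    have h0 := (min_le_right ε (min (x₀ - a) (b - x₀))).trans (min_le_left (x₀ - a) (b - x₀))
    rw [hδdef]; linarith
  have hδb : δ < b - x₀ := by
    have h0 := (min_le_right ε (min (x₀ - a) (b - x₀))).trans (min_le_right (x₀ - a) (b - x₀))
    rw [hδdef]; linarith
  set p := x₀ - δ with hp
  set q := x₀ + δ with hq
  have hap : a < p := by rw [hp]; linarith
  have hpq : p < q := by rw [hp, hq]; linarith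
  have hqb : q < b := by rw [hq]; linarith
  -- the bump function
  set h : ℝ → ℝ := fun x => max (δ - |x - x₀|) 0 with hhdef
  have hhc : Continuous h := by
    apply Continuous.max _ continuous_const
    exact continuous_const.sub ((continuous_id.sub continuous_const).abs)
  have hhnn : ∀ x, 0 ≤ h x := fun x => le_max_right _ _
  have hsupp : Function.support h ⊆ Set.Ioo p q := by
    intro x hx
    simp only [Function.mem_support, hhdef] at hx
    have : 0 < δ - |x - x₀| := by
      by_contra hle
      push_neg at hle
      exact hx (max_eq_right hle)
    have := abs_lt.mp (by linarith : |x - x₀| < δ)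
    exact ⟨by rw [hp]; linarith, by rw [hq]; linarith⟩
  have hsub : Set.Ioo p q ⊆ Set.Ioo a b := fun x hx => ⟨hap.trans hx.1, hx.2.trans hqb⟩
  have hha : h a = 0 := by
    simp only [hhdef]
    apply max_eq_right
    have : |a - x₀| = x₀ - a := by rw [abs_sub_comm]; exact abs_of_pos (by linarith)
    rw [this]; linarith
  have hhb : h b = 0 := by
    simp only [hhdef]
    apply max_eq_right
    have : |b - x₀| = b - x₀ := abs_of_pos (by linarith)
    rw [this]; linarith
  refine ⟨h, hhc, hhnn, ⟨δ, hδ, hsupp, hsub⟩, hha, hhb, ?_⟩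
  -- positivity of the fractional integral
  set F : ℝ → ℝ := fun x => (b - x) ^ (α - 1) * (g x * h x) with hFdef
  have hFzero : ∀ x ∉ Set.Ioo p q, F x = 0 := by
    intro x hx
    have : h x = 0 := by
      by_contra hne
      exact hx (hsupp hne)
    simp [hFdef, this]
  -- F is continuous on [p,q]
  have hFcont : ContinuousOn F (Set.Icc p q) := by
    apply ContinuousOn.mul
    · apply ContinuousOn.rpow_const
      · exact (continuous_const.sub continuous_id).continuousOn
      · intro x hx
        left
        have : x < b := lt_of_le_of_lt hx.2 hqb
        have h2 : (0:ℝ) < b - x := by linarith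
        exact ne_of_gt h2
    · exact ContinuousOn.mul (hg.mono (fun x hx =>
        ⟨(hap.le.trans hx.1), hx.2.trans hqb.le⟩)) hhc.continuousOn
  have hFint_mid : IntervalIntegrable F volume p q :=
    hFcont.intervalIntegrable_of_Icc hpq.le
  have hFint_ap : IntervalIntegrable F volume a p := by
    apply intervalIntegrable_of_eqOn_zero
    intro x hx
    rw [Set.uIcc_of_le hap.le] at hx
    exact hFzero x (fun hmem => absurd hx.2 (not_le.mpr hmem.1))
  have hFint_qb : IntervalIntegrable F volume q b := by
    apply intervalIntegrable_of_eqOn_zero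
    intro x hx
    rw [Set.uIcc_of_le hqb.le] at hx
    exact hFzero x (fun hmem => absurd hx.1 (not_le.mpr hmem.2))
  have hzero_ap : ∫ x in a..p, F x = 0 := by
    rw [intervalIntegral.integral_congr (g := fun _ => (0:ℝ)), intervalIntegral.integral_zero]
    intro x hx
    rw [Set.uIcc_of_le hap.le] at hx
    exact hFzero x (fun hmem => absurd hx.2 (not_le.mpr hmem.1))
  have hzero_qb : ∫ x in q..b, F x = 0 := by
    rw [intervalIntegral.integral_congr (g := fun _ => (0:ℝ)), intervalIntegral.integral_zero]
    intro x hx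
    rw [Set.uIcc_of_le hqb.le] at hx
    exact hFzero x (fun hmem => absurd hx.1 (not_le.mpr hmem.2))
  have hmid_pos : 0 < ∫ x in p..q, F x := by
    apply intervalIntegral.intervalIntegral_pos_of_pos_on hFint_mid _ hpq
    intro x hx
    have hxb : x < b := hx.2.trans hqb
    have hg_pos : 0 < g x := by
      apply hball
      simp only [Metric.mem_ball, Real.dist_eq]
      have h1 : p < x := hx.1
      have h2 : x < q := hx.2
      rw [hp] at h1; rw [hq] at h2
      rw [abs_lt]
      constructor <;> linarith
    have hh_pos : 0 < h x := by
      simp only [hhdef]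
      have h1 : p < x := hx.1
      have h2 : x < q := hx.2
      rw [hp] at h1; rw [hq] at h2
      have : |x - x₀| < δ := abs_lt.mpr ⟨by linarith, by linarith⟩
      exact lt_max_of_lt_left (by linarith)
    have hb_pos : (0:ℝ) < (b - x) ^ (α - 1) := rpow_pos_of_pos (by linarith) _
    exact mul_pos hb_pos (mul_pos hg_pos hh_pos)
  have hsplit : ∫ x in a..b, F x = ∫ x in p..q, F x := by
    rw [← intervalIntegral.integral_add_adjacent_intervals hFint_ap
        (hFint_mid.trans hFint_qb), hzero_ap, zero_add,
      ← intervalIntegral.integral_add_adjacent_intervals hFint_mid hFint_qb, hzero_qb, add_zero]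
  have : 0 < ∫ x in a..b, F x := hsplit ▸ hmid_pos
  unfold fracInt
  exact mul_pos hα this
end
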